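/- arXiv:1504.00721 — 2 statements merged into one kernel-verified Lean document; each statement's English description precedes it below -/
import Mathlib

section
/- The transition matrix of the star K_{1,n} (n ≥ 1) is U(t) = [[cos(√n·t), (i/√n)·sin(√n·t)·𝟙^T], [(i/√n)·sin(√n·t)·𝟙, I + (1/n)(cos(√n·t) − 1)·J]], where the first row/column is indexed by the center and J is the n×n all-ones matrix. -/
/-!
The adjacency matrix `A` of the star satisfies `A³ = n • A`. Hence in the exponential series of
`(i t) • A` the odd powers are multiples of `A` and the even powers of positive degree are multiples
of `A²`; with `c = √n` the two scalar series are those of `sinh (c i t) / c = i sin (c t) / c` and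
`(cosh (c i t) - 1) / c² = (cos (c t) - 1) / n`. Reading off the entries of `1`, `A` and `A²`
gives the formula.
-/

/-- Adjacency matrix of the star `K_{1,n}`: vertex `0` is the center,
vertices `1,…,n` are the leaves. -/
noncomputable def starAdj (n : ℕ) : Matrix (Fin (n + 1)) (Fin (n + 1)) ℂ :=
  fun i j => if (i = 0 ∧ j ≠ 0) ∨ (i ≠ 0 ∧ j = 0) then 1 else 0

open scoped Nat

section PowThree

variable {R 𝔸 : Type*} [CommSemiring R] [Semiring 𝔸] [Algebra R 𝔸] {A : 𝔸} {μ : R}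

theorem pow_two_mul_add_one_of_pow_three_eq (hA : A ^ 3 = μ • A) (k : ℕ) :
    A ^ (2 * k + 1) = μ ^ k • A := by
  induction k with
  | zero => simp
  | succ k ih =>
    rw [show 2 * (k + 1) + 1 = 2 * k + 1 + 2 by ring, pow_add, ih, smul_mul_assoc, ← pow_succ' A 2,
      hA, smul_smul, pow_succ]

theorem pow_two_mul_add_two_of_pow_three_eq (hA : A ^ 3 = μ • A) (k : ℕ) :
    A ^ (2 * k + 2) = μ ^ k • A ^ 2 := by
  rw [pow_succ, pow_two_mul_add_one_of_pow_three_eq hA, smul_mul_assoc, ← pow_two]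

end PowThree

theorem Complex.hasSum_cosh_sub_one (z : ℂ) :
    HasSum (fun k : ℕ ↦ z ^ (2 * k + 2) / ↑(2 * k + 2)!) (cosh z - 1) := by
  simpa [mul_add_one] using (hasSum_nat_add_iff' 1).mpr (hasSum_cosh z)

open Complex in
theorem NormedSpace.exp_smul_of_pow_three_eq {𝔸 : Type*} [Ring 𝔸] [Algebra ℂ 𝔸]
    [TopologicalSpace 𝔸] [IsTopologicalRing 𝔸] [ContinuousSMul ℂ 𝔸] [T2Space 𝔸]
    {A : 𝔸} {c : ℂ} (hc : c ≠ 0)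
    (hA : A ^ 3 = c ^ 2 • A) (z : ℂ) :
    NormedSpace.exp (z • A) =
      1 + (sinh (c * z) / c) • A + ((cosh (c * z) - 1) / c ^ 2) • A ^ 2 := by
  have hodd : HasSum (fun k : ℕ ↦ ((2 * k + 1)! : ℂ)⁻¹ • (z • A) ^ (2 * k + 1))
      ((sinh (c * z) / c) • A) := by
    refine (((hasSum_sinh (c * z)).div_const c).smul_const A).congr_fun fun k ↦ ?_
    rw [smul_pow, pow_two_mul_add_one_of_pow_three_eq hA, smul_smul, smul_smul]
    congr 1
    field_simp
    ring
  have htail : HasSum (fun k : ℕ ↦ ((2 * (k + 1))! : ℂ)⁻¹ • (z • A) ^ (2 * (k + 1)))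
      (((cosh (c * z) - 1) / c ^ 2) • A ^ 2) := by
    refine (((hasSum_cosh_sub_one (c * z)).div_const (c ^ 2)).smul_const (A ^ 2)).congr_fun
      fun k ↦ ?_
    rw [mul_add_one, smul_pow, pow_two_mul_add_two_of_pow_three_eq hA, smul_smul, smul_smul]
    congr 1
    field_simp
    ring
  have heven : HasSum (fun k : ℕ ↦ ((2 * k)! : ℂ)⁻¹ • (z • A) ^ (2 * k))
      (((cosh (c * z) - 1) / c ^ 2) • A ^ 2 + 1) := by
    simpa using (hasSum_nat_add_iff (f := fun k : ℕ ↦ ((2 * k)! : ℂ)⁻¹ • (z • A) ^ (2 * k)) 1).mp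
      htail
  rw [congrFun (NormedSpace.exp_eq_tsum ℂ) (z • A),
    (HasSum.even_add_odd (f := fun m : ℕ ↦ (m ! : ℂ)⁻¹ • (z • A) ^ m) heven hodd).tsum_eq]
  abel

theorem starAdj_sq (n : ℕ) :
    starAdj n ^ 2 = Matrix.of fun i j ↦
      if i = 0 ∧ j = 0 then (n : ℂ) else if i ≠ 0 ∧ j ≠ 0 then 1 else 0 := by
  ext i j
  rw [sq, Matrix.mul_apply, Matrix.of_apply]
  rcases eq_or_ne i 0 with rfl | hi <;> rcases eq_or_ne j 0 with rfl | hj <;>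
    simp [starAdj, Fin.sum_univ_succ, Fin.succ_ne_zero, *]

theorem starAdj_pow_three (n : ℕ) : starAdj n ^ 3 = (n : ℂ) • starAdj n := by
  ext i j
  rw [pow_succ, starAdj_sq, Matrix.mul_apply, Matrix.smul_apply]
  rcases eq_or_ne i 0 with rfl | hi <;> rcases eq_or_ne j 0 with rfl | hj <;>
    simp [starAdj, Fin.sum_univ_succ, Fin.succ_ne_zero, *]

theorem star_transition_matrix (n : ℕ) (hn : 1 ≤ n) (t : ℝ) (i j : Fin (n + 1)) :
    NormedSpace.exp ((Complex.I * (t : ℂ)) • starAdj n) i j =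
      if i = 0 ∧ j = 0 then Complex.cos ((Real.sqrt n * t : ℝ) : ℂ)
      else if i = 0 ∨ j = 0 then
        (Complex.I / (Real.sqrt n : ℂ)) * Complex.sin ((Real.sqrt n * t : ℝ) : ℂ)
      else (if i = j then 1 else 0)
        + (1 / (n : ℂ)) * (Complex.cos ((Real.sqrt n * t : ℝ) : ℂ) - 1) := by
  have hsq : ((Real.sqrt n : ℝ) : ℂ) ^ 2 = n := by
    rw [← Complex.ofReal_pow, Real.sq_sqrt n.cast_nonneg, Complex.ofReal_natCast]
  have hc : ((Real.sqrt n : ℝ) : ℂ) ≠ 0 := by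
    rw [Complex.ofReal_ne_zero, Real.sqrt_ne_zero']
    exact_mod_cast hn
  have hA : starAdj n ^ 3 = ((Real.sqrt n : ℝ) : ℂ) ^ 2 • starAdj n := by
    rw [hsq, starAdj_pow_three]
  rw [NormedSpace.exp_smul_of_pow_three_eq hc hA, hsq, ← mul_assoc, mul_right_comm,
    Complex.cosh_mul_I, Complex.sinh_mul_I, starAdj_sq]
  push_cast
  have hn' : (n : ℂ) ≠ 0 := hsq ▸ pow_ne_zero 2 hc
  rcases eq_or_ne i 0 with rfl | hi <;> rcases eq_or_ne j 0 with rfl | hj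
  · simp [starAdj]
    field_simp
    ring
  all_goals
    simp [starAdj, Matrix.one_apply_ne', Matrix.one_apply, *]
    ring
end

section
/- For every k ≥ 2, setting d = 2·3^k − 9 and r = 3^k − 1: (a) the binomial coefficient C(d−1, r−1) is divisible by 3^{k−2} but not by 3^{k−1}; (b) for each h with 1 ≤ h ≤ k−2, the binomial coefficient C(d−h−1, r−h−1) is divisible by 3^{k−h−1}. -/
/-!
By Kummer's theorem the `3`-adic valuation of `C(m + n, m)` counts the positions `i` at which
adding `m` and `n` in base `3` carries past `3 ^ i`. Here `d - h - 1 = (3^k - 8) + (3^k - (h + 2))`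
with `m = 3^k - (h + 2)`, and two numbers `3^k - a`, `3^k - b` produce a carry past `3 ^ i`
(for `i ≤ k`) as soon as `a + b ≤ 3 ^ i`. For `h = 0` this happens exactly at `i = 3, …, k`,
giving valuation `k - 2`; for `h ≥ 1` at least at `i = h + 2, …, k`.
-/

open Finset

theorem Nat.sub_mod_of_dvd {M N c : ℕ} (hMN : M ∣ N) (hN : 0 < N) (hc : 0 < c) (hcM : c ≤ M) :
    (N - c) % M = M - c := by
  obtain ⟨q, rfl⟩ := hMN
  have hq : 0 < q := Nat.pos_of_mul_pos_left hN
  have hsplit : M * q - c = M * (q - 1) + (M - c) := by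
    rw [Nat.mul_sub_one]
    have : M ≤ M * q := Nat.le_mul_of_pos_right M hq
    omega
  rw [hsplit, Nat.mul_add_mod, Nat.mod_eq_of_lt (by omega)]

theorem Nat.le_sub_mod_add_sub_mod_iff {M N a b : ℕ} (hMN : M ∣ N) (hN : 0 < N)
    (ha : 0 < a) (hb : 0 < b) (haM : a ≤ M) (hbM : b ≤ M) :
    M ≤ (N - a) % M + (N - b) % M ↔ a + b ≤ M := by
  rw [Nat.sub_mod_of_dvd hMN hN ha haM, Nat.sub_mod_of_dvd hMN hN hb hbM]
  omega

variable {p : ℕ} [Fact p.Prime]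

theorem padicValNat_choose_pow_sub {k a b : ℕ} (ha : 0 < a) (hak : a ≤ p ^ k)
    (hbk : b ≤ p ^ k) :
    padicValNat p ((p ^ k - b + (p ^ k - a)).choose (p ^ k - a)) =
      #{i ∈ Ico 1 (k + 1) | p ^ i ≤ (p ^ k - a) % p ^ i + (p ^ k - b) % p ^ i} := by
  refine padicValNat_choose' (Nat.log_lt_of_lt_pow' k.succ_ne_zero ?_)
  have : 2 * p ^ k ≤ p ^ (k + 1) := by
    rw [pow_succ, mul_comm]; exact Nat.mul_le_mul_left _ (Fact.out : p.Prime).two_le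
  omega

theorem le_padicValNat_choose_pow_sub {j k a b : ℕ} (ha : 0 < a) (hb : 0 < b)
    (hab : a + b ≤ p ^ j) :
    k + 1 - j ≤ padicValNat p ((p ^ k - b + (p ^ k - a)).choose (p ^ k - a)) := by
  rcases Nat.lt_or_ge k j with hkj | hjk
  · omega
  have hp : 0 < p := (Fact.out : p.Prime).pos
  have hj : j ≠ 0 := by
    rintro rfl
    rw [pow_zero] at hab
    omega
  have hpj : p ^ j ≤ p ^ k := Nat.pow_le_pow_right hp hjk
  rw [padicValNat_choose_pow_sub ha (by omega) (by omega)]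
  calc k + 1 - j = #(Ico j (k + 1)) := by simp
    _ ≤ _ := card_le_card fun i hi => by
      obtain ⟨hji, hik⟩ := mem_Ico.mp hi
      have hpi : p ^ j ≤ p ^ i := Nat.pow_le_pow_right hp hji
      refine mem_filter.mpr ⟨mem_Ico.mpr ⟨by omega, hik⟩, ?_⟩
      exact (Nat.le_sub_mod_add_sub_mod_iff (pow_dvd_pow p (by omega)) (by positivity) ha hb
        (by omega) (by omega)).mpr (by omega)

theorem padicValNat_three_choose_pow_sub_two {k : ℕ} (hk : 2 ≤ k) :
    padicValNat 3 ((3 ^ k - 8 + (3 ^ k - 2)).choose (3 ^ k - 2)) = k - 2 := by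
  have : Fact (Nat.Prime 3) := ⟨Nat.prime_three⟩
  have h9 : 9 ∣ 3 ^ k := pow_dvd_pow 3 hk
  have h3 : 3 ∣ 3 ^ k := dvd_trans (by norm_num) h9
  have : 9 ≤ 3 ^ k := Nat.le_of_dvd (by positivity) h9
  refine le_antisymm ?_
    (le_padicValNat_choose_pow_sub (j := 3) (by norm_num) (by norm_num) (by norm_num))
  rw [padicValNat_choose_pow_sub (by norm_num) (by omega) (by omega)]
  calc _ ≤ #(Ico 3 (k + 1)) := card_le_card fun i hi => by
        obtain ⟨hi, hcarry⟩ := mem_filter.mp hi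
        refine mem_Ico.mpr ⟨?_, (mem_Ico.mp hi).2⟩
        by_contra! hi3
        obtain rfl | rfl : i = 1 ∨ i = 2 := by have := (mem_Ico.mp hi).1; omega
        · -- the deficit `8` exceeds `3`, so the residue of `3 ^ k - 8` is read off modulo `9`
          have h2 : (3 ^ k - 2) % 3 = 1 :=
            Nat.sub_mod_of_dvd h3 (by positivity) (by norm_num) (by norm_num)
          have h8 : (3 ^ k - 8) % 3 = 1 := by
            rw [← Nat.mod_mod_of_dvd _ (by norm_num : 3 ∣ 9),
              Nat.sub_mod_of_dvd h9 (by positivity) (by norm_num) (by norm_num)]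
          simp only [pow_one, h2, h8] at hcarry
          omega
        · have := (Nat.le_sub_mod_add_sub_mod_iff h9 (by positivity) (by norm_num) (by norm_num)
            (by norm_num) (by norm_num)).mp hcarry
          omega
    _ = k - 2 := by simp

theorem ternary_binomial_divisibility (k d r : ℕ) (hk : 2 ≤ k)
    (hd : d = 2 * 3 ^ k - 9) (hr : r = 3 ^ k - 1) :
    -- (a) C(d-1, r-1) is divisible by 3^{k-2} but not by 3^{k-1}
    (3 ^ (k - 2) ∣ (d - 1).choose (r - 1) ∧ ¬ (3 ^ (k - 1) ∣ (d - 1).choose (r - 1)))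
    -- (b) for 1 ≤ h ≤ k-2, C(d-h-1, r-h-1) is divisible by 3^{k-h-1}
    ∧ (∀ h : ℕ, 1 ≤ h → h ≤ k - 2 →
        3 ^ (k - h - 1) ∣ (d - h - 1).choose (r - h - 1)) := by
  have : Fact (Nat.Prime 3) := ⟨Nat.prime_three⟩
  have h9 : 9 ≤ 3 ^ k := le_trans (by norm_num) (Nat.pow_le_pow_right three_pos hk)
  refine ⟨?_, fun h hh1 hh2 => ?_⟩
  · have hchoose : (d - 1).choose (r - 1) = (3 ^ k - 8 + (3 ^ k - 2)).choose (3 ^ k - 2) := by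
      congr 1 <;> omega
    have hne := Nat.choose_ne_zero (Nat.le_add_left (3 ^ k - 2) (3 ^ k - 8))
    rw [hchoose, padicValNat_dvd_iff_le hne, padicValNat_dvd_iff_le hne,
      padicValNat_three_choose_pow_sub_two hk]
    omega
  · have hkpow : k < 3 ^ k := Nat.lt_pow_self (by norm_num)
    have hcarry : h + 2 + 8 ≤ 3 ^ (h + 2) := by
      have : h < 3 ^ h := Nat.lt_pow_self (by norm_num)
      rw [pow_add]
      omega
    have hchoose : (d - h - 1).choose (r - h - 1) =
        (3 ^ k - 8 + (3 ^ k - (h + 2))).choose (3 ^ k - (h + 2)) := by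
      congr 1 <;> omega
    rw [hchoose, padicValNat_dvd_iff_le (Nat.choose_ne_zero (Nat.le_add_left _ _))]
    have := le_padicValNat_choose_pow_sub (k := k) (by omega) (by norm_num) hcarry
    omega
end
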